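/- If x and y are nonnegative vectors of length n with nonincreasing components and x ≺ y, then x can be obtained from y by successively applying a finite number of B-transforms. -/
import Mathlib


open Finset Matrix

/-- Prefix sum of the first `k` components. -/
def psum {n : ℕ} (x : Fin n → ℝ) (k : ℕ) : ℝ :=
  ∑ i ∈ Finset.filter (fun i : Fin n => (i : ℕ) < k) Finset.univ, x i

/-- `x` is majorized by `y` (both assumed sorted nonincreasingly). -/
def Maj {n : ℕ} (x y : Fin n → ℝ) : Prop :=
  (∀ k, k < n → psum x k ≤ psum y k) ∧ (∑ i, x i) = ∑ i, y i

/-- An A-transform: for `i < j` and `λ ∈ [0,1]`, replace `x i` by `x i + λ * x j`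
and `x j` by `(1 - λ) * x j`. -/
def ATrans {n : ℕ} (x x' : Fin n → ℝ) : Prop :=
  ∃ (i j : Fin n) (lam : ℝ), i < j ∧ 0 ≤ lam ∧ lam ≤ 1 ∧
    x' = Function.update (Function.update x i (x i + lam * x j)) j ((1 - lam) * x j)

/-- A B-transform: for `i < j` and `λ ∈ [0,1]`, replace `y i` by `(1 - λ) * y i`
and `y j` by `y j + λ * y i`. -/
def BTrans {n : ℕ} (y y' : Fin n → ℝ) : Prop :=
  ∃ (i j : Fin n) (lam : ℝ), i < j ∧ 0 ≤ lam ∧ lam ≤ 1 ∧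
    y' = Function.update (Function.update y i ((1 - lam) * y i)) j (y j + lam * y i)

/-- Lower triangular row-stochastic matrix. -/
def LowerRS {n : ℕ} (L : Matrix (Fin n) (Fin n) ℝ) : Prop :=
  (∀ i j, 0 ≤ L i j) ∧ (∀ i j : Fin n, i < j → L i j = 0) ∧ (∀ i, ∑ j, L i j = 1)

/-- Upper triangular row-stochastic matrix. -/
def UpperRS {n : ℕ} (U : Matrix (Fin n) (Fin n) ℝ) : Prop :=
  (∀ i j, 0 ≤ U i j) ∧ (∀ i j : Fin n, j < i → U i j = 0) ∧ (∀ i, ∑ j, U i j = 1)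

lemma psum_succ {n : ℕ} (x : Fin n → ℝ) (k : ℕ) (hk : k < n) :
    psum x (k + 1) = psum x k + x ⟨k, hk⟩ := by
  unfold psum
  have hset : Finset.filter (fun i : Fin n => (i : ℕ) < k + 1) Finset.univ
      = insert ⟨k, hk⟩ (Finset.filter (fun i : Fin n => (i : ℕ) < k) Finset.univ) := by
    ext m
    simp only [Finset.mem_insert, Finset.mem_filter, Finset.mem_univ, true_and]
    constructor
    · intro h
      rcases Nat.lt_succ_iff_lt_or_eq.mp h with h | h
      · exact Or.inr h
      · exact Or.inl (by ext; exact h)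
    · rintro (rfl | h)
      · simp
      · omega
  rw [hset, Finset.sum_insert (by simp), add_comm]

lemma psum_univ {n : ℕ} (x : Fin n → ℝ) : psum x n = ∑ i, x i := by
  unfold psum
  apply Finset.sum_congr _ (fun _ _ => rfl)
  ext m; simp [m.isLt]

lemma psum_split {n : ℕ} (y : Fin n → ℝ) (a b : ℕ) (hab : a ≤ b) :
    psum y b = psum y a +
      ∑ m ∈ Finset.filter (fun m : Fin n => a ≤ (m : ℕ) ∧ (m : ℕ) < b) Finset.univ, y m := by
  unfold psum
  rw [← Finset.sum_union (by simp [Finset.disjoint_left]; omega)]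
  apply Finset.sum_congr _ (fun _ _ => rfl)
  ext m
  simp only [Finset.mem_filter, Finset.mem_univ, true_and, Finset.mem_union]
  omega

lemma maj_psum_le {n : ℕ} {x y : Fin n → ℝ} (hmaj : Maj x y) :
    ∀ k, k ≤ n → psum x k ≤ psum y k := by
  intro k hk
  rcases lt_or_eq_of_le hk with h | rfl
  · exact hmaj.1 k h
  · rw [psum_univ, psum_univ, hmaj.2]

lemma main_aux {n : ℕ} (x : Fin n → ℝ) (hx0 : ∀ i, 0 ≤ x i) (hxs : Antitone x) :
    ∀ d : ℕ, ∀ y : Fin n → ℝ, Antitone y → Maj x y →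
      (Finset.univ.filter (fun m => x m ≠ y m)).card ≤ d →
      Relation.ReflTransGen BTrans y x := by
  intro d
  induction d with
  | zero =>
    intro y _ _ hcard
    have : y = x := by
      funext m
      by_contra hm
      have : m ∈ Finset.univ.filter (fun m => x m ≠ y m) := by
        simp [Ne, eq_comm]; exact fun h => hm h.symm
      have := Finset.card_pos.mpr ⟨m, this⟩
      omega
    exact this ▸ Relation.ReflTransGen.refl
  | succ d ih =>
    intro y hys hmaj hcard
    set D := Finset.univ.filter (fun m => x m ≠ y m) with hD
    by_cases hDe : D = ∅
    · have : y = x := by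
        funext m
        by_contra hm
        have : m ∈ D := by simp [hD, Ne, eq_comm]; exact fun h => hm h.symm
        simp [hDe] at this
      exact this ▸ Relation.ReflTransGen.refl
    -- there is an index where y < x
    have hJne : (Finset.univ.filter (fun m : Fin n => y m < x m)).Nonempty := by
      by_contra hJ
      apply hDe
      rw [Finset.not_nonempty_iff_eq_empty] at hJ
      have hle : ∀ m, x m ≤ y m := by
        intro m
        by_contra hmm
        have : m ∈ Finset.univ.filter (fun m : Fin n => y m < x m) := by
          simp; linarith [lt_of_not_ge hmm]
        simp [hJ] at this
      have heq : ∀ m : Fin n, x m = y m := by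
        intro m
        have := Finset.sum_le_sum (s := Finset.univ) (fun i _ => hle i)
        have h2 := hmaj.2
        by_contra hne
        have hlt : x m < y m := lt_of_le_of_ne (hle m) hne
        have : (∑ i, x i) < ∑ i, y i := by
          apply Finset.sum_lt_sum (fun i _ => hle i) ⟨m, Finset.mem_univ m, hlt⟩
        linarith
      ext m; simp [hD]; exact heq m
    set J := Finset.univ.filter (fun m : Fin n => y m < x m) with hJdef
    set j : Fin n := J.min' hJne with hjdef
    have hjJ : j ∈ J := Finset.min'_mem _ _
    have hjlt : y j < x j := by simpa [hJdef] using hjJ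
    have hjmin : ∀ m : Fin n, m < j → x m ≤ y m := by
      intro m hm
      by_contra hmm
      have hmJ : m ∈ J := by simp [hJdef]; linarith [lt_of_not_ge hmm]
      exact absurd (Finset.min'_le _ _ hmJ) (not_le.mpr hm)
    -- there is i < j with x i < y i
    set I := Finset.univ.filter (fun m : Fin n => m < j ∧ x m < y m) with hIdef
    have hIne : I.Nonempty := by
      by_contra hI
      rw [Finset.not_nonempty_iff_eq_empty] at hI
      have heqlt : ∀ m : Fin n, m < j → x m = y m := by
        intro m hm
        refine le_antisymm (hjmin m hm) ?_
        by_contra hmm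
        have : m ∈ I := by simp [hIdef]; exact ⟨hm, lt_of_not_ge hmm⟩
        simp [hI] at this
      have hps : psum x (j : ℕ) = psum y (j : ℕ) := by
        unfold psum
        apply Finset.sum_congr rfl
        intro m hm
        simp only [Finset.mem_filter] at hm
        exact heqlt m (Fin.lt_def.mpr hm.2)
      have h1 : psum x ((j : ℕ) + 1) ≤ psum y ((j : ℕ) + 1) := maj_psum_le hmaj _ j.isLt
      rw [psum_succ x _ j.isLt, psum_succ y _ j.isLt, hps] at h1
      simp only [Fin.eta] at h1
      linarith
    set i : Fin n := I.max' hIne with hidef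
    have hiI : i ∈ I := Finset.max'_mem _ _
    have hiprop : i < j ∧ x i < y i := by simpa [hIdef] using hiI
    have hij : i < j := hiprop.1
    have hilt : x i < y i := hiprop.2
    have hmid : ∀ m : Fin n, i < m → m < j → x m = y m := by
      intro m h1 h2
      refine le_antisymm (hjmin m h2) ?_
      by_contra hmm
      have : m ∈ I := by simp [hIdef]; exact ⟨h2, lt_of_not_ge hmm⟩
      exact absurd (Finset.le_max' _ _ this) (not_le.mpr h1)
    -- the transform
    set δ : ℝ := min (y i - x i) (x j - y j) with hδdef
    have hδpos : 0 < δ := lt_min (by linarith) (by linarith)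
    have hyipos : 0 < y i := lt_of_le_of_lt (hx0 i) hilt
    have hδle : δ ≤ y i - x i := min_le_left _ _
    have hδle' : δ ≤ x j - y j := min_le_right _ _
    set y' : Fin n → ℝ := fun m => if m = i then y i - δ else if m = j then y j + δ else y m
      with hy'def
    have hne : i ≠ j := ne_of_lt hij
    have hy'i : y' i = y i - δ := by simp [hy'def]
    have hy'j : y' j = y j + δ := by simp [hy'def, hne.symm]
    have hy'o : ∀ m, m ≠ i → m ≠ j → y' m = y m := by
      intro m h1 h2; simp [hy'def, h1, h2]
    have hBT : BTrans y y' := by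
      refine ⟨i, j, δ / y i, hij, by positivity, ?_, ?_⟩
      · rw [div_le_one hyipos]; linarith [hx0 i]
      · funext m
        by_cases h1 : m = j
        · subst h1
          rw [Function.update_self]
          rw [hy'j]
          field_simp
        · rw [Function.update_of_ne h1]
          by_cases h2 : m = i
          · subst h2
            rw [Function.update_self, hy'i]
            field_simp
          · rw [Function.update_of_ne h2, hy'o m h2 h1]
    -- y' is antitone
    have hxij : x j ≤ x i := hxs hij.le
    have hys' : Antitone y' := by
      intro a b hab
      by_cases hai : a = i
      · subst hai
        by_cases hbi : b = i
        · subst hbi; exact le_refl _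
        by_cases hbj : b = j
        · subst hbj; rw [hy'j, hy'i]; linarith
        · have hib : i < b := lt_of_le_of_ne hab (Ne.symm hbi)
          rw [hy'o b hbi hbj, hy'i]
          rcases lt_or_ge b j with h | h
          · have h1 := hmid b hib h
            have h2 : x b ≤ x i := hxs hib.le
            linarith
          · have h1 : y b ≤ y j := hys h
            linarith
      · by_cases haj : a = j
        · subst haj
          by_cases hbj : b = j
          · subst hbj; exact le_refl _
          by_cases hbi : b = i
          · exact absurd (hij.trans_le (hab.trans_eq hbi)) (lt_irrefl i)
          · rw [hy'o b hbi hbj, hy'j]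
            have : y b ≤ y j := hys hab
            linarith
        · by_cases hbi : b = i
          · subst hbi
            have hai' : a < i := lt_of_le_of_ne hab hai
            rw [hy'o a hai haj, hy'i]
            have : y i ≤ y a := hys hai'.le
            linarith
          · by_cases hbj : b = j
            · subst hbj
              have haj' : a < j := lt_of_le_of_ne hab haj
              rw [hy'o a hai haj, hy'j]
              rcases lt_trichotomy a i with h | h | h
              · have h1 : y i ≤ y a := hys h.le
                linarith
              · exact absurd h hai
              · have h1 := hmid a h haj'
                have h2 : x j ≤ x a := hxs haj'.le
                linarith
            · rw [hy'o a hai haj, hy'o b hbi hbj]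
              exact hys hab
    -- pointwise description via indicator
    have hg : ∀ m, y' m = y m + ((if m = i then -δ else 0) + (if m = j then δ else 0)) := by
      intro m
      by_cases h1 : m = i
      · subst h1; simp [hy'i, hne]; ring
      · by_cases h2 : m = j
        · subst h2; simp [hy'j, hne.symm, h1]
        · simp [hy'o m h1 h2, h1, h2]
    have hpsum' : ∀ k : ℕ, psum y' k
        = psum y k + ((if (i : ℕ) < k then -δ else 0) + (if (j : ℕ) < k then δ else 0)) := by
      intro k
      unfold psum
      rw [Finset.sum_congr rfl (fun m _ => hg m), Finset.sum_add_distrib]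
      congr 1
      rw [Finset.sum_add_distrib]
      congr 1
      · rw [Finset.sum_ite_eq' _ i (fun _ => -δ)]
        simp
      · rw [Finset.sum_ite_eq' _ j (fun _ => δ)]
        simp
    have hsum' : ∑ m, y' m = ∑ m, y m := by
      have h := hpsum' n
      rw [psum_univ, psum_univ] at h
      simp [i.isLt, j.isLt] at h
      linarith
    -- majorization is preserved
    have hmaj' : Maj x y' := by
      constructor
      · intro k hk
        rw [hpsum' k]
        by_cases h1 : (i : ℕ) < k
        · by_cases h2 : (j : ℕ) < k
          · simp only [h1, h2, if_pos]
            have := hmaj.1 k hk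
            linarith
          · simp only [h1, if_pos, h2, if_neg, not_false_iff]
            have hik : (i : ℕ) + 1 ≤ k := h1
            have h3 := psum_split y ((i : ℕ) + 1) k hik
            have h4 := psum_split x ((i : ℕ) + 1) k hik
            have hmideq :
                ∑ m ∈ Finset.filter (fun m : Fin n => (i : ℕ) + 1 ≤ (m : ℕ) ∧ (m : ℕ) < k) Finset.univ, x m
                = ∑ m ∈ Finset.filter (fun m : Fin n => (i : ℕ) + 1 ≤ (m : ℕ) ∧ (m : ℕ) < k) Finset.univ, y m := by
              apply Finset.sum_congr rfl
              intro m hm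
              simp only [Finset.mem_filter, Finset.mem_univ, true_and] at hm
              exact hmid m (Fin.lt_def.mpr (by omega)) (Fin.lt_def.mpr (by omega))
            have h5 : psum x ((i : ℕ) + 1) + δ ≤ psum y ((i : ℕ) + 1) := by
              rw [psum_succ x _ i.isLt, psum_succ y _ i.isLt]
              have h6 := maj_psum_le hmaj (i : ℕ) (le_of_lt i.isLt)
              simp only [Fin.eta]
              linarith
            rw [h3, h4] at *
            linarith
        · have h2 : ¬ (j : ℕ) < k := by
            intro h
            exact h1 (lt_trans (Fin.lt_def.mp hij) h)
          simp only [h1, h2, if_neg, not_false_iff]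
          have := hmaj.1 k hk
          linarith
      · rw [hmaj.2, hsum']
    -- the disagreement count decreases
    have hiD : i ∈ D := by simp [hD]; exact ne_of_lt hilt
    have hjD : j ∈ D := by simp [hD]; exact (ne_of_lt hjlt).symm
    have hcard' : (Finset.univ.filter (fun m => x m ≠ y' m)).card ≤ d := by
      rcases le_total (y i - x i) (x j - y j) with h | h
      · have hδeq : δ = y i - x i := min_eq_left h
        have hsub : Finset.univ.filter (fun m => x m ≠ y' m) ⊆ D.erase i := by
          intro m hm
          simp only [Finset.mem_filter, Finset.mem_univ, true_and] at hm
          rw [Finset.mem_erase]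
          constructor
          · rintro rfl
            apply hm
            rw [hy'i, hδeq]; ring
          · by_cases h1 : m = i
            · exact absurd (by rw [h1, hy'i, hδeq]; ring) hm
            · by_cases h2 : m = j
              · rw [h2]; exact hjD
              · simp [hD]; rw [← hy'o m h1 h2]; exact hm
        calc (Finset.univ.filter (fun m => x m ≠ y' m)).card
            ≤ (D.erase i).card := Finset.card_le_card hsub
          _ = D.card - 1 := Finset.card_erase_of_mem hiD
          _ ≤ d := by omega
      · have hδeq : δ = x j - y j := min_eq_right h
        have hsub : Finset.univ.filter (fun m => x m ≠ y' m) ⊆ D.erase j := by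
          intro m hm
          simp only [Finset.mem_filter, Finset.mem_univ, true_and] at hm
          rw [Finset.mem_erase]
          constructor
          · rintro rfl
            apply hm
            rw [hy'j, hδeq]; ring
          · by_cases h1 : m = i
            · rw [h1]; exact hiD
            · by_cases h2 : m = j
              · exact absurd (by rw [h2, hy'j, hδeq]; ring) hm
              · simp [hD]; rw [← hy'o m h1 h2]; exact hm
        calc (Finset.univ.filter (fun m => x m ≠ y' m)).card
            ≤ (D.erase j).card := Finset.card_le_card hsub
          _ = D.card - 1 := Finset.card_erase_of_mem hjD
          _ ≤ d := by omega
    exact Relation.ReflTransGen.head hBT (ih y' hys' hmaj' hcard')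

theorem stmt9 {n : ℕ} (x y : Fin n → ℝ)
    (hx0 : ∀ i, 0 ≤ x i) (hy0 : ∀ i, 0 ≤ y i)
    (hxs : Antitone x) (hys : Antitone y)
    (hmaj : Maj x y) :
    Relation.ReflTransGen BTrans y x := by
  exact main_aux x hx0 hxs _ y hys hmaj le_rfl
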